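/- Under the Minkowski curvature flow, the isoperimetric ratio L_Q²/A evolves by d/dt (L_Q²/A) = −(2L_Q/A)(∫₀^{L_Q} k² ds − A(𝒫) L_Q/A), and hence, by the Minkowski Gage inequality, L_Q²/A is nonincreasing in time. -/

import Mathlib

open Real Set MeasureTheory

open scoped ContDiff

noncomputable section

def det2 (u v : ℝ × ℝ) : ℝ := u.1 * v.2 - u.2 * v.1

def er (θ : ℝ) : ℝ × ℝ := (Real.cos θ, Real.sin θ)

def eth (θ : ℝ) : ℝ × ℝ := (-Real.sin θ, Real.cos θ)
/-! ### Auxiliary lemmas -/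

section Aux

variable {E : Type*} [NormedAddCommGroup E] [NormedSpace ℝ E]

lemma aux_le2 : (2 : WithTop ℕ∞) ≤ ∞ := by
  rw [show ((2 : WithTop ℕ∞)) = (((2 : ℕ∞)) : WithTop ℕ∞) from rfl]
  exact WithTop.coe_le_coe.mpr le_top

lemma pdv_hasDerivAt (g : ℝ × ℝ → E) (hg : ContDiff ℝ ∞ g) (u t : ℝ) :
    HasDerivAt (fun s : ℝ => g (u, s)) (fderiv ℝ g (u, t) (0, 1)) t := by
  have h1 : HasFDerivAt g (fderiv ℝ g (u, t)) (u, t) :=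
    (hg.differentiable (by simp) (u, t)).hasFDerivAt
  have h2 : HasDerivAt (fun s : ℝ => (u, s)) ((0 : ℝ), (1 : ℝ)) t :=
    (hasDerivAt_const t u).prodMk (hasDerivAt_id t)
  exact h1.comp_hasDerivAt t h2

lemma pdh_hasDerivAt (g : ℝ × ℝ → E) (hg : ContDiff ℝ ∞ g) (u t : ℝ) :
    HasDerivAt (fun s : ℝ => g (s, t)) (fderiv ℝ g (u, t) (1, 0)) u := by
  have h1 : HasFDerivAt g (fderiv ℝ g (u, t)) (u, t) :=
    (hg.differentiable (by simp) (u, t)).hasFDerivAt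
  have h2 : HasDerivAt (fun s : ℝ => (s, t)) ((1 : ℝ), (0 : ℝ)) u :=
    (hasDerivAt_id u).prodMk (hasDerivAt_const u t)
  exact h1.comp_hasDerivAt u h2

lemma pd1_hasDerivAt (f : ℝ → ℝ → E) (hf : ContDiff ℝ ∞ (Function.uncurry f)) (u t : ℝ) :
    HasDerivAt (fun u' => f u' t) (deriv (fun u' => f u' t) u) u :=
  (pdh_hasDerivAt (Function.uncurry f) hf u t).differentiableAt.hasDerivAt

lemma pd2_hasDerivAt (f : ℝ → ℝ → E) (hf : ContDiff ℝ ∞ (Function.uncurry f)) (u t : ℝ) :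
    HasDerivAt (fun t' => f u t') (deriv (fun t' => f u t') t) t :=
  (pdv_hasDerivAt (Function.uncurry f) hf u t).differentiableAt.hasDerivAt

lemma pd1_eq (f : ℝ → ℝ → E) (hf : ContDiff ℝ ∞ (Function.uncurry f)) (u t : ℝ) :
    deriv (fun u' => f u' t) u = fderiv ℝ (Function.uncurry f) (u, t) (1, 0) :=
  (pdh_hasDerivAt (Function.uncurry f) hf u t).deriv

lemma pd2_eq (f : ℝ → ℝ → E) (hf : ContDiff ℝ ∞ (Function.uncurry f)) (u t : ℝ) :
    deriv (fun t' => f u t') t = fderiv ℝ (Function.uncurry f) (u, t) (0, 1) :=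
  (pdv_hasDerivAt (Function.uncurry f) hf u t).deriv

lemma pd1_smooth (f : ℝ → ℝ → E) (hf : ContDiff ℝ ∞ (Function.uncurry f)) :
    ContDiff ℝ ∞ (Function.uncurry (fun u t => deriv (fun u' => f u' t) u)) := by
  have : Function.uncurry (fun u t => deriv (fun u' => f u' t) u)
      = fun x : ℝ × ℝ => fderiv ℝ (Function.uncurry f) x (1, 0) := by
    funext x; exact pd1_eq f hf x.1 x.2
  rw [this]
  exact (hf.fderiv_right (le_refl _)).clm_apply contDiff_const

lemma pd2_smooth (f : ℝ → ℝ → E) (hf : ContDiff ℝ ∞ (Function.uncurry f)) :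
    ContDiff ℝ ∞ (Function.uncurry (fun u t => deriv (fun t' => f u t') t)) := by
  have : Function.uncurry (fun u t => deriv (fun t' => f u t') t)
      = fun x : ℝ × ℝ => fderiv ℝ (Function.uncurry f) x (0, 1) := by
    funext x; exact pd2_eq f hf x.1 x.2
  rw [this]
  exact (hf.fderiv_right (le_refl _)).clm_apply contDiff_const

lemma mixed_partials (f : ℝ → ℝ → E) (hf : ContDiff ℝ ∞ (Function.uncurry f)) (u t : ℝ) :
    deriv (fun t' => deriv (fun u' => f u' t') u) t
      = deriv (fun u' => deriv (fun t' => f u' t') t) u := by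
  set g := fderiv ℝ (Function.uncurry f) with hgdef
  have hgsm : ContDiff ℝ ∞ g := hf.fderiv_right (le_refl _)
  have e1 : (fun t' => deriv (fun u' => f u' t') u) = fun t' => g (u, t') (1, 0) := by
    funext t'; exact pd1_eq f hf u t'
  have e2 : (fun u' => deriv (fun t' => f u' t') t) = fun u' => g (u', t) (0, 1) := by
    funext u'; exact pd2_eq f hf u' t
  rw [e1, e2]
  have h1 : HasDerivAt (fun t' => g (u, t') (1, 0)) (fderiv ℝ g (u, t) (0, 1) (1, 0)) t := by
    have := (pdv_hasDerivAt g hgsm u t).clm_apply (hasDerivAt_const t ((1 : ℝ), (0 : ℝ)))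
    simpa using this
  have h2 : HasDerivAt (fun u' => g (u', t) (0, 1)) (fderiv ℝ g (u, t) (1, 0) (0, 1)) u := by
    have := (pdh_hasDerivAt g hgsm u t).clm_apply (hasDerivAt_const u ((0 : ℝ), (1 : ℝ)))
    simpa using this
  rw [h1.deriv, h2.deriv]
  exact (hf.contDiffAt.isSymmSndFDerivAt (by simpa using aux_le2)).eq _ _

lemma param_hasDerivAt [CompleteSpace E] (f : ℝ → ℝ → E)
    (hf : ContDiff ℝ ∞ (Function.uncurry f)) (b t : ℝ) :
    HasDerivAt (fun t' => ∫ u in (0:ℝ)..b, f u t')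
      (∫ u in (0:ℝ)..b, deriv (fun t' => f u t') t) t := by
  set G := Function.uncurry f with hG
  set g' : ℝ × ℝ → E := fun x => fderiv ℝ G x (0, 1) with hg'
  have hg'sm : ContDiff ℝ ∞ g' := (hf.fderiv_right (le_refl _)).clm_apply contDiff_const
  have hK : IsCompact ((uIcc (0:ℝ) b) ×ˢ (Icc (t-1) (t+1))) :=
    isCompact_uIcc.prod isCompact_Icc
  obtain ⟨C, hC⟩ := hK.exists_bound_of_continuousOn (hg'sm.continuous.continuousOn)
  have key := intervalIntegral.hasDerivAt_integral_of_dominated_loc_of_deriv_le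
    (F := fun x u => f u x) (F' := fun x u => g' (u, x)) (x₀ := t) (bound := fun _ => C)
    (a := 0) (b := b) (μ := volume) (s := Metric.ball t 1) (Metric.ball_mem_nhds t one_pos)
    (Filter.Eventually.of_forall (fun x =>
      ((hf.continuous.comp (continuous_id.prodMk continuous_const)).aestronglyMeasurable)))
    ((hf.continuous.comp (continuous_id.prodMk continuous_const)).intervalIntegrable _ _)
    ((hg'sm.continuous.comp (continuous_id.prodMk continuous_const)).aestronglyMeasurable)
    (Filter.Eventually.of_forall (fun u hu x hx => by
      apply hC
      refine ⟨uIoc_subset_uIcc hu, ?_⟩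
      have := Real.ball_eq_Ioo t 1 ▸ hx
      exact Ioo_subset_Icc_self this))
    (intervalIntegrable_const)
    (Filter.Eventually.of_forall (fun u hu x hx => pdv_hasDerivAt G hf u x))
  have h2 := key.2
  have : (∫ u in (0:ℝ)..b, g' (u, t)) = ∫ u in (0:ℝ)..b, deriv (fun t' => f u t') t :=
    intervalIntegral.integral_congr (fun u _ => ((pdv_hasDerivAt G hf u t).deriv).symm)
  rwa [this] at h2

lemma det2_smul_right (u : ℝ × ℝ) (r : ℝ) (w : ℝ × ℝ) : det2 u (r • w) = r * det2 u w := by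
  simp [det2, Prod.smul_fst, Prod.smul_snd, smul_eq_mul]; ring

lemma det2_smul_left (r : ℝ) (u w : ℝ × ℝ) : det2 (r • u) w = r * det2 u w := by
  simp [det2, Prod.smul_fst, Prod.smul_snd, smul_eq_mul]; ring

lemma det2_self (u : ℝ × ℝ) : det2 u u = 0 := by simp [det2]; ring

lemma det2_add_left (u v w : ℝ × ℝ) : det2 (u + v) w = det2 u w + det2 v w := by
  simp [det2, Prod.fst_add, Prod.snd_add]; ring

lemma det2_add_right (u v w : ℝ × ℝ) : det2 u (v + w) = det2 u v + det2 u w := by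
  simp [det2, Prod.fst_add, Prod.snd_add]; ring

lemma det2_special (x y : ℝ × ℝ) (c d e : ℝ) :
    det2 x (c • (d • y) + e • x) = c * (d * det2 x y) := by
  simp [det2, Prod.smul_fst, Prod.smul_snd, smul_eq_mul, Prod.fst_add, Prod.snd_add]
  ring

lemma det2_antisymm (u w : ℝ × ℝ) : det2 u w = -det2 w u := by simp [det2]; ring

lemma det2_er_eth (θ : ℝ) : det2 (er θ) (eth θ) = 1 := by
  simp [det2, er, eth]; rw [← sin_sq_add_cos_sq θ]; ring

lemma hasDerivAt_det2 {c d : ℝ → ℝ × ℝ} {c' d' : ℝ × ℝ} {x : ℝ}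
    (hc : HasDerivAt c c' x) (hd : HasDerivAt d d' x) :
    HasDerivAt (fun y => det2 (c y) (d y)) (det2 c' (d x) + det2 (c x) d') x := by
  have hc1 : HasDerivAt (fun y => (c y).1) c'.1 x :=
    (ContinuousLinearMap.fst ℝ ℝ ℝ).hasFDerivAt.comp_hasDerivAt x hc
  have hc2 : HasDerivAt (fun y => (c y).2) c'.2 x :=
    (ContinuousLinearMap.snd ℝ ℝ ℝ).hasFDerivAt.comp_hasDerivAt x hc
  have hd1 : HasDerivAt (fun y => (d y).1) d'.1 x :=
    (ContinuousLinearMap.fst ℝ ℝ ℝ).hasFDerivAt.comp_hasDerivAt x hd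
  have hd2 : HasDerivAt (fun y => (d y).2) d'.2 x :=
    (ContinuousLinearMap.snd ℝ ℝ ℝ).hasFDerivAt.comp_hasDerivAt x hd
  have := (hc1.mul hd2).sub (hc2.mul hd1)
  refine HasDerivAt.congr_deriv (f := fun y => det2 (c y) (d y)) this ?_
  simp only [det2]; ring

lemma contDiff_det2 : ContDiff ℝ ∞ (fun x : (ℝ × ℝ) × (ℝ × ℝ) => det2 x.1 x.2) := by
  unfold det2
  fun_prop

lemma contDiff_er : ContDiff ℝ ∞ er :=
  (Real.contDiff_cos.of_le le_top).prodMk (Real.contDiff_sin.of_le le_top)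

lemma contDiff_eth : ContDiff ℝ ∞ eth :=
  ((Real.contDiff_sin.of_le le_top).neg).prodMk (Real.contDiff_cos.of_le le_top)

lemma hasDerivAt_er (θ : ℝ) : HasDerivAt er (eth θ) θ :=
  (Real.hasDerivAt_cos θ).prodMk (Real.hasDerivAt_sin θ)

lemma hasDerivAt_eth (θ : ℝ) : HasDerivAt eth (-er θ) θ := by
  have h1 : HasDerivAt (fun x => -Real.sin x) (-Real.cos θ) θ := (Real.hasDerivAt_sin θ).neg
  have h2 : HasDerivAt Real.cos (-Real.sin θ) θ := Real.hasDerivAt_cos θ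
  have := h1.prodMk h2
  exact this

lemma periodic_deriv' {f : ℝ → ℝ} {T : ℝ} (hf : Function.Periodic f T) :
    Function.Periodic (deriv f) T := by
  intro x
  have h1 : (fun y : ℝ => f (y + T)) = f := funext fun y => hf y
  have h2 : deriv (fun y => f (y + T)) x = deriv f (x + T) := by
    simpa using deriv_comp_add_const f T x
  rw [← h2, h1]

lemma p_hasDerivAt (a : ℝ → ℝ) (ha : ContDiff ℝ ∞ a) (p : ℝ → ℝ × ℝ)
    (hp : ∀ θ, p θ = a θ • er θ + deriv a θ • eth θ) (θ : ℝ) :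
    HasDerivAt p ((a θ + deriv (deriv a) θ) • eth θ) θ := by
  have hda := contDiff_infty_iff_deriv.mp ha
  have hdda := contDiff_infty_iff_deriv.mp hda.2
  have h1 : HasDerivAt (fun θ => a θ • er θ)
      (a θ • eth θ + deriv a θ • er θ) θ :=
    ((hda.1 θ).hasDerivAt).smul (hasDerivAt_er θ)
  have h2 : HasDerivAt (fun θ => deriv a θ • eth θ)
      (deriv a θ • (-er θ) + deriv (deriv a) θ • eth θ) θ :=
    ((hdda.1 θ).hasDerivAt).smul (hasDerivAt_eth θ)
  have h3 := h1.add h2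
  rw [funext hp]
  refine h3.congr_deriv ?_
  rw [add_smul, smul_neg]; abel

end Aux

/-- Evolution of the isoperimetric ratio under the Minkowski curvature flow;
by the Gage inequality it is nonincreasing. -/
theorem stmt15 (a : ℝ → ℝ) (ha : ContDiff ℝ (⊤ : ℕ∞) a) (haper : Function.Periodic a (2 * π))
    (hapos : ∀ θ, 0 < a θ) (hconv : ∀ θ, 0 < a θ + deriv (deriv a) θ)
    (p : ℝ → ℝ × ℝ) (hp : ∀ θ, p θ = a θ • er θ + deriv a θ • eth θ)
    (q : ℝ → ℝ × ℝ) (hq : ∀ θ, q θ = (det2 (p θ) (deriv p θ))⁻¹ • deriv p θ)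
    (F : ℝ → ℝ → ℝ × ℝ) (θf v k : ℝ → ℝ → ℝ)
    (hF : ContDiff ℝ (⊤ : ℕ∞) (Function.uncurry F)) (hθf : ContDiff ℝ (⊤ : ℕ∞) (Function.uncurry θf))
    (hv : ContDiff ℝ (⊤ : ℕ∞) (Function.uncurry v)) (hk : ContDiff ℝ (⊤ : ℕ∞) (Function.uncurry k))
    (hvpos : ∀ u t, 0 < v u t)
    (hFper : ∀ u t, F (u + 2 * π) t = F u t)
    (hvper : ∀ u t, v (u + 2 * π) t = v u t) (hkper : ∀ u t, k (u + 2 * π) t = k u t)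
    (hθfper : ∀ u t, θf (u + 2 * π) t = θf u t + 2 * π)
    (T : ℝ) (hT : 0 < T)
    (heq1 : ∀ u : ℝ, ∀ t ∈ Set.Ico 0 T, deriv (fun u' => F u' t) u = v u t • q (θf u t))
    (heq2 : ∀ u : ℝ, ∀ t ∈ Set.Ico 0 T, deriv (fun t' => F u t') t = -(k u t) • p (θf u t))
    (hcurv : ∀ u : ℝ, ∀ t ∈ Set.Ico 0 T, k u t =
      det2 (p (θf u t)) (deriv p (θf u t)) * deriv (fun u' => θf u' t) u / v u t)
    (L A : ℝ → ℝ)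
    (hL : ∀ t, L t = ∫ u in (0:ℝ)..2 * π, v u t)
    (hA : ∀ t, A t = (1 / 2) * ∫ u in (0:ℝ)..2 * π, det2 (F u t) (deriv (fun u' => F u' t) u))
    (AP : ℝ) (hAP : AP = (1 / 2) * ∫ θ in (0:ℝ)..2 * π, det2 (p θ) (deriv p θ))
    (hApos : ∀ t ∈ Set.Ico 0 T, 0 < A t)
    (hGage : ∀ t ∈ Set.Ico 0 T, AP * L t / A t ≤ ∫ u in (0:ℝ)..2 * π, (k u t) ^ 2 * v u t) :
    (∀ t ∈ Set.Ioo 0 T,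
        HasDerivAt (fun t' => L t' ^ 2 / A t')
          (-(2 * L t / A t) *
            ((∫ u in (0:ℝ)..2 * π, (k u t) ^ 2 * v u t) - AP * L t / A t)) t) ∧
      AntitoneOn (fun t => L t ^ 2 / A t) (Set.Ico 0 T) := by
  -- downgrade smoothness
  have haI : ContDiff ℝ ∞ a := ha.of_le (by simp)
  have hFI : ContDiff ℝ ∞ (Function.uncurry F) := hF.of_le (by simp)
  have hθfI : ContDiff ℝ ∞ (Function.uncurry θf) := hθf.of_le (by simp)
  have hvI : ContDiff ℝ ∞ (Function.uncurry v) := hv.of_le (by simp)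
  have hkI : ContDiff ℝ ∞ (Function.uncurry k) := hk.of_le (by simp)
  have hda := contDiff_infty_iff_deriv.mp haI
  have hdda := contDiff_infty_iff_deriv.mp hda.2
  set b : ℝ → ℝ := fun θ => a θ + deriv (deriv a) θ with hbdef
  have hbI : ContDiff ℝ ∞ b := haI.add hdda.2
  have hpd : ∀ θ, HasDerivAt p (b θ • eth θ) θ := p_hasDerivAt a haI p hp
  have hpI : ContDiff ℝ ∞ p := by
    rw [funext hp]; exact (haI.smul contDiff_er).add (hda.2.smul contDiff_eth)
  have hdp : ∀ θ, deriv p θ = b θ • eth θ := fun θ => (hpd θ).deriv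
  have hdpI : ContDiff ℝ ∞ (deriv p) := by
    rw [funext hdp]; exact hbI.smul contDiff_eth
  have hg : ∀ θ, det2 (p θ) (deriv p θ) = a θ * b θ := by
    intro θ
    rw [hdp, hp, det2_add_left, det2_smul_left, det2_smul_left, det2_smul_right,
      det2_smul_right, det2_er_eth, det2_self]
    ring
  have hgpos : ∀ θ, 0 < a θ * b θ := fun θ => mul_pos (hapos θ) (hconv θ)
  have hdet_ne : ∀ θ, det2 (p θ) (deriv p θ) ≠ 0 := fun θ => by
    rw [hg]; exact (hgpos θ).ne'
  have hpq1 : ∀ θ, det2 (p θ) (q θ) = 1 := fun θ => by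
    rw [hq, det2_smul_right, inv_mul_cancel₀ (hdet_ne θ)]
  have hpq0 : ∀ θ, det2 (deriv p θ) (q θ) = 0 := fun θ => by
    rw [hq, det2_smul_right, det2_self, mul_zero]
  -- periodicity of the curvature density g
  have hbper : Function.Periodic b (2 * π) := fun x => by
    simp only [hbdef]
    rw [haper x, periodic_deriv' (periodic_deriv' haper) x]
  set g : ℝ → ℝ := fun θ => det2 (p θ) (deriv p θ) with hgdef2
  have hgcont : Continuous g :=
    contDiff_det2.continuous.comp (hpI.continuous.prodMk hdpI.continuous)
  have hgper : Function.Periodic g (2 * π) := fun x => by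
    simp only [hgdef2, hg]; rw [haper x, hbper x]
  -- partial derivatives of F
  set Fu : ℝ → ℝ → ℝ × ℝ := fun u t => deriv (fun u' => F u' t) u with hFudef
  set Ft : ℝ → ℝ → ℝ × ℝ := fun u t => deriv (fun t' => F u t') t with hFtdef
  have hFuI : ContDiff ℝ ∞ (Function.uncurry Fu) := pd1_smooth F hFI
  have hFtI : ContDiff ℝ ∞ (Function.uncurry Ft) := pd2_smooth F hFI
  have hmix : ∀ u t, deriv (fun t' => Fu u t') t = deriv (fun u' => Ft u' t) u :=
    fun u t => mixed_partials F hFI u t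
  -- the function w coincides with v on the flow interval
  set w : ℝ → ℝ → ℝ := fun u t => det2 (p (θf u t)) (Fu u t) with hwdef
  have hwI : ContDiff ℝ ∞ (Function.uncurry w) := by
    exact contDiff_det2.comp ((hpI.comp hθfI).prodMk hFuI)
  have hwv : ∀ u : ℝ, ∀ t ∈ Set.Ico 0 T, w u t = v u t := by
    intro u t ht
    simp only [hwdef, hFudef]
    rw [heq1 u t ht, det2_smul_right, hpq1, mul_one]
  -- the area integrand
  set m : ℝ → ℝ → ℝ := fun u s => det2 (F u s) (Fu u s) with hmdef
  have hmI : ContDiff ℝ ∞ (Function.uncurry m) :=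
    contDiff_det2.comp (hFI.prodMk hFuI)
  have hAfun : A = fun s => (1 / 2) * ∫ u in (0:ℝ)..2 * π, m u s := funext hA
  -- evolution of w
  have hwt : ∀ u : ℝ, ∀ t ∈ Set.Ico 0 T,
      deriv (fun t' => w u t') t = -((k u t) ^ 2 * v u t) := by
    intro u t ht
    have hθt : HasDerivAt (fun t' => θf u t') (deriv (fun t' => θf u t') t) t :=
      pd2_hasDerivAt θf hθfI u t
    have hcomp : HasDerivAt (p ∘ fun t' => θf u t')
        ((deriv (fun t' => θf u t') t) • (b (θf u t) • eth (θf u t))) t :=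
      HasDerivAt.scomp (h := fun t' => θf u t') (x := t) (hpd (θf u t)) hθt
    have hFut : HasDerivAt (fun t' => Fu u t') (deriv (fun t' => Fu u t') t) t :=
      pd2_hasDerivAt Fu hFuI u t
    have hDet : HasDerivAt (fun t' => w u t')
        (det2 ((deriv (fun t' => θf u t') t) • (b (θf u t) • eth (θf u t))) (Fu u t)
          + det2 (p (θf u t)) (deriv (fun t' => Fu u t') t)) t :=
      hasDerivAt_det2 hcomp hFut
    rw [hDet.deriv]
    -- first term vanishes
    have hterm1 : det2 ((deriv (fun t' => θf u t') t) • (b (θf u t) • eth (θf u t)))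
        (Fu u t) = 0 := by
      simp only [hFudef]
      rw [det2_smul_left, ← hdp (θf u t), heq1 u t ht, det2_smul_right, hpq0,
        mul_zero, mul_zero]
    -- second term via Schwarz symmetry
    have hku : HasDerivAt (fun u' => k u' t) (deriv (fun u' => k u' t) u) u :=
      pd1_hasDerivAt k hkI u t
    have hθu : HasDerivAt (fun u' => θf u' t) (deriv (fun u' => θf u' t) u) u :=
      pd1_hasDerivAt θf hθfI u t
    have hcomp2' : HasDerivAt (p ∘ fun u' => θf u' t)
        ((deriv (fun u' => θf u' t) u) • (b (θf u t) • eth (θf u t))) u :=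
      HasDerivAt.scomp (h := fun u' => θf u' t) (x := u) (hpd (θf u t)) hθu
    have hcomp2 : HasDerivAt (fun u' => p (θf u' t))
        ((deriv (fun u' => θf u' t) u) • (b (θf u t) • eth (θf u t))) u := hcomp2'
    have hprod : HasDerivAt (fun u' => -(k u' t) • p (θf u' t))
        ((-(k u t)) • ((deriv (fun u' => θf u' t) u) • (b (θf u t) • eth (θf u t)))
          + (-(deriv (fun u' => k u' t) u)) • p (θf u t)) u :=
      (hku.neg).smul hcomp2
    have hFteq : (fun u' => Ft u' t) = fun u' => -(k u' t) • p (θf u' t) :=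
      funext fun u' => heq2 u' t ht
    have hD : deriv (fun t' => Fu u t') t
        = (-(k u t)) • ((deriv (fun u' => θf u' t) u) • (b (θf u t) • eth (θf u t)))
          + (-(deriv (fun u' => k u' t) u)) • p (θf u t) := by
      rw [hmix u t, hFteq]
      exact hprod.deriv
    rw [hterm1, hD, det2_special, ← hdp (θf u t)]
    have hkv : det2 (p (θf u t)) (deriv p (θf u t)) * deriv (fun u' => θf u' t) u
        = k u t * v u t := by
      have hcv := hcurv u t ht
      rw [eq_div_iff (hvpos u t).ne'] at hcv
      linarith [hcv]
    rw [show (deriv (fun u' => θf u' t) u) * det2 (p (θf u t)) (deriv p (θf u t))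
        = k u t * v u t from by linarith [hkv]]
    ring
  -- derivative of L inside the interval
  have hLd : ∀ t ∈ Set.Ioo 0 T,
      HasDerivAt L (-(∫ u in (0:ℝ)..2 * π, (k u t) ^ 2 * v u t)) t := by
    intro t ht
    have htI : t ∈ Set.Ico 0 T := ⟨ht.1.le, ht.2⟩
    have h1 := param_hasDerivAt w hwI (2 * π) t
    have hval : (∫ u in (0:ℝ)..2 * π, deriv (fun t' => w u t') t)
        = -(∫ u in (0:ℝ)..2 * π, (k u t) ^ 2 * v u t) := by
      rw [← intervalIntegral.integral_neg]
      exact intervalIntegral.integral_congr fun u _ => by rw [hwt u t htI]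
    rw [hval] at h1
    have h2 : L =ᶠ[nhds t] (fun t' => ∫ u in (0:ℝ)..2 * π, w u t') := by
      filter_upwards [isOpen_Ioo.mem_nhds ht] with s hs
      rw [hL s]
      exact intervalIntegral.integral_congr fun u _ => (hwv u s ⟨hs.1.le, hs.2⟩).symm
    exact h1.congr_of_eventuallyEq h2
  -- derivative of A
  have hAd : ∀ t ∈ Set.Ioo 0 T, HasDerivAt A (-(2 * AP)) t := by
    intro t ht
    have htI : t ∈ Set.Ico 0 T := ⟨ht.1.le, ht.2⟩
    -- time derivative of the integrand m
    have hmt : ∀ u : ℝ, deriv (fun t' => m u t') t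
        = det2 (Ft u t) (Fu u t) + det2 (F u t) (deriv (fun u' => Ft u' t) u) := by
      intro u
      have hFt' : HasDerivAt (fun t' => F u t') (Ft u t) t := pd2_hasDerivAt F hFI u t
      have hFut : HasDerivAt (fun t' => Fu u t') (deriv (fun t' => Fu u t') t) t :=
        pd2_hasDerivAt Fu hFuI u t
      have hDm : HasDerivAt (fun t' => m u t')
          (det2 (Ft u t) (Fu u t) + det2 (F u t) (deriv (fun t' => Fu u t') t)) t :=
        hasDerivAt_det2 hFt' hFut
      rw [hDm.deriv, hmix u t]
    -- the boundary term
    have hφd : ∀ u : ℝ, HasDerivAt (fun u' => det2 (F u' t) (Ft u' t))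
        (det2 (Fu u t) (Ft u t) + det2 (F u t) (deriv (fun u' => Ft u' t) u)) u :=
      fun u => hasDerivAt_det2 (pd1_hasDerivAt F hFI u t) (pd1_hasDerivAt Ft hFtI u t)
    have hpd1FtI := pd1_smooth Ft hFtI
    have hcont1 : Continuous (fun u => det2 (Fu u t) (Ft u t)
        + det2 (F u t) (deriv (fun u' => Ft u' t) u)) := by
      apply Continuous.add
      · exact contDiff_det2.continuous.comp
          ((hFuI.continuous.comp (continuous_id.prodMk continuous_const)).prodMk
            (hFtI.continuous.comp (continuous_id.prodMk continuous_const)))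
      · exact contDiff_det2.continuous.comp
          ((hFI.continuous.comp (continuous_id.prodMk continuous_const)).prodMk
            (hpd1FtI.continuous.comp (continuous_id.prodMk continuous_const)))
    have hFTC : (∫ u in (0:ℝ)..2 * π, (det2 (Fu u t) (Ft u t)
          + det2 (F u t) (deriv (fun u' => Ft u' t) u)))
        = det2 (F (2 * π) t) (Ft (2 * π) t) - det2 (F 0 t) (Ft 0 t) :=
      intervalIntegral.integral_eq_sub_of_hasDerivAt (fun u _ => hφd u)
        (hcont1.intervalIntegrable _ _)
    have hzero : det2 (F (2 * π) t) (Ft (2 * π) t) - det2 (F 0 t) (Ft 0 t) = 0 := by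
      have hF20 : F (2 * π) t = F 0 t := by
        have := hFper 0 t; rwa [zero_add] at this
      have hFt20 : Ft (2 * π) t = Ft 0 t := by
        have hfun : (fun t' => F (2 * π) t') = (fun t' => F 0 t') := by
          funext t'
          have := hFper 0 t'; rwa [zero_add] at this
        simp only [hFtdef]
        rw [hfun]
      rw [hF20, hFt20]; ring
    -- curvature identity for the first term
    have hc1 : ∀ u : ℝ, det2 (Ft u t) (Fu u t) = -(k u t * v u t) := by
      intro u
      simp only [hFtdef, hFudef]
      rw [heq2 u t htI, heq1 u t htI, det2_smul_left, det2_smul_right, hpq1]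
      ring
    -- total turning integral equals twice the enclosed area AP
    have hGd : ∀ x : ℝ, HasDerivAt (fun y => ∫ s in (0:ℝ)..y, g s) (g x) x := fun x =>
      intervalIntegral.integral_hasDerivAt_right (hgcont.intervalIntegrable _ _)
        (hgcont.stronglyMeasurableAtFilter _ _) hgcont.continuousAt
    have hGcomp : ∀ u : ℝ, HasDerivAt (fun u' => ∫ s in (0:ℝ)..(θf u' t), g s)
        (k u t * v u t) u := by
      intro u
      have h := (hGd (θf u t)).comp u (pd1_hasDerivAt θf hθfI u t)
      have hcv := hcurv u t htI
      rw [eq_div_iff (hvpos u t).ne'] at hcv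
      have : g (θf u t) * deriv (fun u' => θf u' t) u = k u t * v u t := by
        simp only [hgdef2]; linarith [hcv]
      rw [this] at h
      exact h
    have hkvcont : Continuous (fun u => k u t * v u t) :=
      (hkI.continuous.comp (continuous_id.prodMk continuous_const)).mul
        (hvI.continuous.comp (continuous_id.prodMk continuous_const))
    have hint2 : (∫ u in (0:ℝ)..2 * π, k u t * v u t)
        = (∫ s in (0:ℝ)..(θf (2 * π) t), g s) - (∫ s in (0:ℝ)..(θf 0 t), g s) :=
      intervalIntegral.integral_eq_sub_of_hasDerivAt (fun u _ => hGcomp u)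
        (hkvcont.intervalIntegrable _ _)
    have hθper : θf (2 * π) t = θf 0 t + 2 * π := by
      have := hθfper 0 t; rwa [zero_add] at this
    have hGdiff : (∫ s in (0:ℝ)..(θf 0 t + 2 * π), g s) - (∫ s in (0:ℝ)..(θf 0 t), g s)
        = ∫ s in (θf 0 t)..(θf 0 t + 2 * π), g s := by
      rw [← intervalIntegral.integral_add_adjacent_intervals
        (hgcont.intervalIntegrable 0 (θf 0 t))
        (hgcont.intervalIntegrable (θf 0 t) (θf 0 t + 2 * π))]
      ring
    have hper2 : (∫ s in (θf 0 t)..(θf 0 t + 2 * π), g s)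
        = ∫ s in (0:ℝ)..(0 + 2 * π), g s :=
      hgper.intervalIntegral_add_eq (θf 0 t) 0
    have h2AP : (∫ u in (0:ℝ)..2 * π, k u t * v u t) = 2 * AP := by
      rw [hint2, hθper, hGdiff, hper2, zero_add]
      have : (∫ s in (0:ℝ)..2 * π, g s) = ∫ θ in (0:ℝ)..2 * π, det2 (p θ) (deriv p θ) :=
        intervalIntegral.integral_congr fun s _ => by rw [hgdef2]
      rw [this, hAP]; ring
    -- put the integral together
    have hintval : (∫ u in (0:ℝ)..2 * π, deriv (fun t' => m u t') t) = -(4 * AP) := by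
      have hsplit : ∀ u ∈ Set.uIcc (0:ℝ) (2 * π), deriv (fun t' => m u t') t
          = 2 * (-(k u t * v u t)) + (det2 (Fu u t) (Ft u t)
            + det2 (F u t) (deriv (fun u' => Ft u' t) u)) := by
        intro u _
        rw [hmt u, det2_antisymm (Fu u t) (Ft u t), hc1 u]
        ring
      rw [intervalIntegral.integral_congr hsplit,
        intervalIntegral.integral_add (f := fun u => 2 * (-(k u t * v u t)))
          ((continuous_const.mul hkvcont.neg).intervalIntegrable _ _)
          (hcont1.intervalIntegrable _ _),
        hFTC, hzero]
      have : (∫ u in (0:ℝ)..2 * π, 2 * (-(k u t * v u t)))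
          = 2 * -(∫ u in (0:ℝ)..2 * π, k u t * v u t) := by
        rw [intervalIntegral.integral_const_mul, intervalIntegral.integral_neg]
      rw [this, h2AP]; ring
    rw [hAfun]
    have h1 := (param_hasDerivAt m hmI (2 * π) t).const_mul (1/2 : ℝ)
    rw [hintval] at h1
    refine h1.congr_deriv ?_
    ring
  -- continuity of L and A on Ico
  have hLcont : ContinuousOn L (Set.Ico 0 T) := by
    have h𝓛cont : Continuous (fun s => ∫ u in (0:ℝ)..2 * π, w u s) :=
      continuous_iff_continuousAt.mpr fun s => (param_hasDerivAt w hwI (2 * π) s).continuousAt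
    apply ContinuousOn.congr (h𝓛cont.continuousOn)
    intro s hs
    rw [hL s]
    exact intervalIntegral.integral_congr fun u _ => (hwv u s hs).symm
  have hAcont : ContinuousOn A (Set.Ico 0 T) := by
    have : Continuous A := by
      rw [hAfun]
      exact continuous_const.mul (continuous_iff_continuousAt.mpr fun s =>
        (param_hasDerivAt m hmI (2 * π) s).continuousAt)
    exact this.continuousOn
  -- main derivative computation
  have hmain : ∀ t ∈ Set.Ioo 0 T,
      HasDerivAt (fun t' => L t' ^ 2 / A t')
        (-(2 * L t / A t) *
          ((∫ u in (0:ℝ)..2 * π, (k u t) ^ 2 * v u t) - AP * L t / A t)) t := by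
    intro t ht
    have htI : t ∈ Set.Ico 0 T := ⟨le_of_lt ht.1, ht.2⟩
    have hAne : A t ≠ 0 := (hApos t htI).ne'
    have h1 := ((hLd t ht).pow 2).div (hAd t ht) hAne
    refine h1.congr_deriv ?_
    have hApow : A t ^ 2 ≠ 0 := pow_ne_zero 2 hAne
    field_simp
    rw [Pi.pow_apply]
    ring
  refine ⟨hmain, ?_⟩
  -- monotonicity
  have hconvx : Convex ℝ (Set.Ico (0:ℝ) T) := convex_Ico 0 T
  have hint : interior (Set.Ico (0:ℝ) T) = Set.Ioo 0 T := interior_Ico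
  apply antitoneOn_of_deriv_nonpos hconvx
  · exact ((hLcont.pow 2).div hAcont (fun t ht => (hApos t ht).ne'))
  · rw [hint]
    intro t ht
    exact ((hmain t ht).differentiableAt.differentiableWithinAt)
  · rw [hint]
    intro t ht
    have htI : t ∈ Set.Ico 0 T := ⟨le_of_lt ht.1, ht.2⟩
    rw [(hmain t ht).deriv]
    have hL0 : 0 ≤ L t := by
      rw [hL t]
      apply intervalIntegral.integral_nonneg (by positivity)
      intro u _
      exact (hvpos u t).le
    have h2 : 0 ≤ 2 * L t / A t := div_nonneg (by linarith) (hApos t htI).le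
    have h3 : 0 ≤ (∫ u in (0:ℝ)..2 * π, (k u t) ^ 2 * v u t) - AP * L t / A t :=
      sub_nonneg.mpr (hGage t htI)
    have := mul_nonneg h2 h3
    linarith

end
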